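/- arXiv:2209.14462 — 2 statements merged into one kernel-verified Lean document; each statement's English description precedes it below -/
import Mathlib

section
/- Let ε > 0, let x : [0,∞) → [0,1], and let p, μ : [0,∞) → ℝ satisfy: (a) p(b) ≤ b·x(b) for all b ≥ 0 (truthful utility is nonnegative); (b) for all 0 ≤ b ≤ b': p(b') − p(b) ≤ b'·(x(b') − x(b)) + ε; (c) for all 0 ≤ b ≤ b': μ(b') − μ(b) ≤ 2ε + (b' − b)·(x(b') − x(b)). Then: if 0 ≤ v ≤ 2ε, μ(v) − μ(0) ≤ 4ε; and if v > 2ε, μ(v) − μ(0) ≤ (v·x(v) − p(v)) + 3ε·log₂(v/ε) + 4ε. -/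
/-!
Write `u(b) = v·x(b) − p(b)` for the utility of a user of value `v` bidding `b`. Along
`b_l = v − v/2^l` each step has `b_{l+1} − b_l = v − b_{l+1}`, so the ε-SCP term
`(b_{l+1} − b_l)·Δx` equals `v·Δx − b_{l+1}·Δx`, which the payment sandwich bounds by
`u(b_{l+1}) − u(b_l) + ε`: each step raises the miner revenue by at most `3ε` plus the increment
of `u`. Telescoping over `L = ⌊log₂(v/ε)⌋` steps, with `u(0) ≥ 0` and `u(b_L) ≤ u(v) + ε`, and
closing the remaining gap `v/2^L` by one more ε-SCP step gives the bound; Bernoulli's inequality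
`2^s ≤ 1 + s` for the fractional part `s` of `log₂(v/ε)` makes that gap at most `ε(1 + s)`.
-/

open Real

/-- The payment sandwich implied by ε-UIC. -/
def PaymentSandwich (ε : ℝ) (x p : ℝ → ℝ) : Prop :=
  ∀ b b' : ℝ, 0 ≤ b → b ≤ b' → p b' - p b ≤ b' * (x b' - x b) + ε

/-- The bound on the change of miner revenue implied by ε-SCP. -/
def RevenueStepBound (ε : ℝ) (x μ : ℝ → ℝ) : Prop :=
  ∀ b b' : ℝ, 0 ≤ b → b ≤ b' → μ b' - μ b ≤ 2 * ε + (b' - b) * (x b' - x b)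

def bidUtility (x p : ℝ → ℝ) (v b : ℝ) : ℝ := v * x b - p b

noncomputable def geomBid (v : ℝ) (l : ℕ) : ℝ := v - v / 2 ^ l

section GeomBid

variable {v : ℝ}

@[simp]
theorem geomBid_zero (v : ℝ) : geomBid v 0 = 0 := by
  simp [geomBid]

theorem sub_geomBid (v : ℝ) (l : ℕ) : v - geomBid v l = v / 2 ^ l := by
  rw [geomBid, sub_sub_cancel]

theorem geomBid_succ_sub (v : ℝ) (l : ℕ) :
    geomBid v (l + 1) - geomBid v l = v - geomBid v (l + 1) := by
  simp only [geomBid, pow_succ]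
  field_simp
  ring

theorem geomBid_le (hv : 0 ≤ v) (l : ℕ) : geomBid v l ≤ v :=
  sub_le_self v (by positivity)

theorem geomBid_nonneg (hv : 0 ≤ v) (l : ℕ) : 0 ≤ geomBid v l :=
  sub_nonneg.2 (div_le_self hv (one_le_pow₀ one_le_two))

theorem geomBid_le_succ (hv : 0 ≤ v) (l : ℕ) : geomBid v l ≤ geomBid v (l + 1) := by
  have hgap := geomBid_succ_sub v l
  rw [sub_geomBid] at hgap
  have : 0 ≤ v / 2 ^ (l + 1) := by positivity
  linarith

end GeomBid

section Revenue

variable {ε : ℝ} {x p μ : ℝ → ℝ}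

theorem RevenueStepBound.sub_le (hc : RevenueStepBound ε x μ) {b b' : ℝ} (hb : 0 ≤ b)
    (hbb' : b ≤ b') (hxb : 0 ≤ x b) (hxb' : x b' ≤ 1) : μ b' - μ b ≤ 2 * ε + (b' - b) := by
  have hΔx : x b' - x b ≤ 1 := by linarith
  have := mul_le_mul_of_nonneg_left hΔx (sub_nonneg.2 hbb')
  linarith [hc b b' hb hbb']

theorem PaymentSandwich.bidUtility_le (hp : PaymentSandwich ε x p) {v b : ℝ} (hb : 0 ≤ b)
    (hbv : b ≤ v) : bidUtility x p v b ≤ bidUtility x p v v + ε := by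
  unfold bidUtility
  linarith [hp b v hb hbv]

theorem bidUtility_zero_nonneg {v : ℝ} (hv : 0 ≤ v) (hx : 0 ≤ x 0) (hp : p 0 ≤ 0) :
    0 ≤ bidUtility x p v 0 :=
  sub_nonneg.2 (hp.trans (mul_nonneg hv hx))

theorem revenue_sub_le_of_sub_eq (hp : PaymentSandwich ε x p) (hc : RevenueStepBound ε x μ)
    {v b b' : ℝ} (hb : 0 ≤ b) (hbb' : b ≤ b') (hgap : b' - b = v - b') :
    μ b' - μ b ≤ 3 * ε + (bidUtility x p v b' - bidUtility x p v b) := by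
  have hμ := hc b b' hb hbb'
  rw [hgap] at hμ
  unfold bidUtility
  linear_combination hμ + hp b b' hb hbb'

theorem revenue_geomBid_sub_le (hp : PaymentSandwich ε x p) (hc : RevenueStepBound ε x μ)
    {v : ℝ} (hv : 0 ≤ v) (n : ℕ) :
    μ (geomBid v n) - μ 0 ≤
      3 * ε * n + (bidUtility x p v (geomBid v n) - bidUtility x p v 0) := by
  let slack : ℕ → ℝ := fun m =>
    μ (geomBid v m) - 3 * ε * m - bidUtility x p v (geomBid v m)
  have hslack : Antitone slack := antitone_nat_of_succ_le fun m => by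
    have := revenue_sub_le_of_sub_eq hp hc (geomBid_nonneg hv m) (geomBid_le_succ hv m)
      (geomBid_succ_sub v m)
    simp only [slack, Nat.cast_succ]
    linarith
  have := hslack (Nat.zero_le n)
  simp only [slack, geomBid_zero, Nat.cast_zero] at this
  linarith

end Revenue

theorem Real.div_two_pow_floor_logb_le {y : ℝ} (hy : 1 ≤ y) :
    y / 2 ^ ⌊logb 2 y⌋₊ ≤ 1 + (logb 2 y - ⌊logb 2 y⌋₊) := by
  set t := logb 2 y
  have ht : 0 ≤ t := logb_nonneg one_lt_two hy
  have hfrac : t - ⌊t⌋₊ ≤ 1 := by linarith [Nat.lt_floor_add_one t]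
  calc y / 2 ^ ⌊t⌋₊ = (1 + 1) ^ (t - ⌊t⌋₊) := by
        rw [one_add_one_eq_two, rpow_sub two_pos, rpow_natCast, rpow_logb two_pos
          one_lt_two.ne' (by linarith)]
    _ ≤ 1 + (t - ⌊t⌋₊) * 1 :=
        rpow_one_add_le_one_add_mul_self (by norm_num) (sub_nonneg.2 (Nat.floor_le ht)) hfrac
    _ = 1 + (t - ⌊t⌋₊) := by rw [mul_one]

/-- Bound on the drop of miner revenue when a user's bid is lowered to 0, for
plain-model mechanisms satisfying the consequences of ε-UIC (payment
sandwich), nonnegativity of truthful utility, and the ε-SCP miner-revenue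
step bound; proved by telescoping along the geometric sequence
b_l = v − v/2^l. -/
theorem miner_rev_bound_by_user_utility
    (ε : ℝ) (hε : 0 < ε)
    (x p μ : ℝ → ℝ)
    (hx0 : ∀ b : ℝ, 0 ≤ b → 0 ≤ x b)
    (hx1 : ∀ b : ℝ, 0 ≤ b → x b ≤ 1)
    (ha : ∀ b : ℝ, 0 ≤ b → p b ≤ b * x b)
    (hb : ∀ b b' : ℝ, 0 ≤ b → b ≤ b' →
      p b' - p b ≤ b' * (x b' - x b) + ε)
    (hc : ∀ b b' : ℝ, 0 ≤ b → b ≤ b' →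
      μ b' - μ b ≤ 2 * ε + (b' - b) * (x b' - x b)) :
    ∀ v : ℝ,
      (0 ≤ v → v ≤ 2 * ε → μ v - μ 0 ≤ 4 * ε) ∧
      (2 * ε < v →
        μ v - μ 0 ≤ (v * x v - p v) + 3 * ε * Real.logb 2 (v / ε) + 4 * ε) := by
  have hp : PaymentSandwich ε x p := hb
  have hc' : RevenueStepBound ε x μ := hc
  intro v
  constructor
  · intro hv hv2
    linarith [hc'.sub_le le_rfl hv (hx0 0 le_rfl) (hx1 v hv)]
  · intro hv
    have hv0 : 0 ≤ v := by linarith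
    have hy : 1 ≤ v / ε := (one_le_div hε).2 (by linarith)
    set t := logb 2 (v / ε)
    set L := ⌊t⌋₊
    have hLt : ε * L ≤ ε * t :=
      mul_le_mul_of_nonneg_left (Nat.floor_le (logb_nonneg one_lt_two hy)) hε.le
    have hgap : v / 2 ^ L ≤ ε + ε * (t - L) := by
      have := mul_le_mul_of_nonneg_left (div_two_pow_floor_logb_le hy) hε.le
      rwa [mul_div_assoc', mul_div_cancel₀ _ hε.ne', mul_one_add] at this
    have hsteps := revenue_geomBid_sub_le hp hc' hv0 L
    have hlast := hc'.sub_le (geomBid_nonneg hv0 L) (geomBid_le hv0 L)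
      (hx0 _ (geomBid_nonneg hv0 L)) (hx1 v hv0)
    have hutil := hp.bidUtility_le (geomBid_nonneg hv0 L) (geomBid_le hv0 L)
    have hu0 := bidUtility_zero_nonneg hv0 (hx0 0 le_rfl) ((ha 0 le_rfl).trans_eq (zero_mul _))
    rw [sub_geomBid] at hlast
    unfold bidUtility at hsteps hutil hu0
    linarith
end

section
/- (Strict MIC of the staircase mechanism.) Fix the staircase mechanism with parameters k, M, ε, and any fixed tie-breaking rule. For every finite multiset b of bids, every sub-multiset S of b, and every finite multiset F of fake bids injected by the miner with |S| + |F| ≤ k, the miner's strategic utility t(S ∪ F)·ε − (number of confirmed fake bids of F in the block S ∪ F)·F_{t(S∪F)} is at most t(B*)·ε, where B* consists of the top min(k, |b|) bids of b. That is, the miner's utility is maximized by including the top bids and injecting no fake bids. -/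
/-- Payment levels of the staircase mechanism: F_i = F_0 + i·ε with
F_0 = M − min(⌊M/ε⌋, k)·ε. -/
noncomputable def staircaseF (k : ℕ) (M ε : ℝ) (i : ℕ) : ℝ :=
  (M - (min (Nat.floor (M / ε)) k : ℕ) * ε) + (i : ℝ) * ε

/-- Threshold index t(B) of a block B: the largest i such that the i-th
largest bid of B is at least F_i, equivalently such that B contains at least
i bids that are ≥ F_i (and 0 if there is no such i ≥ 1). -/
noncomputable def staircaseThresh (k : ℕ) (M ε : ℝ) (B : Multiset ℝ) : ℕ :=
  (Finset.range (Multiset.card B + 1)).sup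
    (fun i => if i ≤ Multiset.card (B.filter (fun x => staircaseF k M ε i ≤ x)) then i else 0)

/-!
If the miner's block confirms a fake bid, each confirmed bid pays `F_t = F_0 + t·ε`, so the
utility is at most `t·ε - F_t = -F_0 ≤ 0`. Otherwise the `t` confirmed bids are real bids of
`b`, all at least `F_t`; there are at most `k` of them, so the top `min(k, |b|)` bids of `b`
also contain `t` bids that are at least `F_t`, whence `t ≤ t(B*)`.
-/

lemma staircaseF_eq_add (k : ℕ) (M ε : ℝ) (i : ℕ) :
    staircaseF k M ε i = staircaseF k M ε 0 + i * ε := by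
  simp [staircaseF]

lemma staircaseF_zero_nonneg (k : ℕ) {M ε : ℝ} (hM : 0 ≤ M) (hε : 0 < ε) :
    0 ≤ staircaseF k M ε 0 := by
  have h : ((min ⌊M / ε⌋₊ k : ℕ) : ℝ) * ε ≤ M :=
    calc ((min ⌊M / ε⌋₊ k : ℕ) : ℝ) * ε
        ≤ (⌊M / ε⌋₊ : ℝ) * ε := by gcongr; exact min_le_left _ _
      _ ≤ M / ε * ε := by gcongr; exact Nat.floor_le (by positivity)
      _ = M := div_mul_cancel₀ _ hε.ne'
  simp only [staircaseF, Nat.cast_zero, zero_mul, add_zero]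
  linarith

lemma staircaseF_nonneg (k : ℕ) {M ε : ℝ} (hM : 0 ≤ M) (hε : 0 < ε) (i : ℕ) :
    0 ≤ staircaseF k M ε i := by
  rw [staircaseF_eq_add]
  have := staircaseF_zero_nonneg k hM hε
  positivity

lemma staircaseThresh_le_card_filter (k : ℕ) (M ε : ℝ) (B : Multiset ℝ) :
    staircaseThresh k M ε B ≤
      Multiset.card (B.filter (fun x => staircaseF k M ε (staircaseThresh k M ε B) ≤ x)) := by
  obtain ⟨i, -, hi⟩ := Finset.exists_mem_eq_sup (Finset.range (Multiset.card B + 1))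
    ⟨0, Finset.mem_range.mpr (Nat.succ_pos _)⟩
    (fun i => if i ≤ Multiset.card (B.filter (fun x => staircaseF k M ε i ≤ x)) then i else 0)
  rw [← staircaseThresh] at hi
  split_ifs at hi with hc
  · rwa [hi]
  · rw [hi]; exact Nat.zero_le _

lemma le_staircaseThresh (k : ℕ) (M ε : ℝ) {B : Multiset ℝ} {j : ℕ}
    (hj : j ≤ Multiset.card B)
    (hcnt : j ≤ Multiset.card (B.filter (fun x => staircaseF k M ε j ≤ x))) :
    j ≤ staircaseThresh k M ε B := by
  have hmem : j ∈ Finset.range (Multiset.card B + 1) := Finset.mem_range.mpr (by omega)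
  calc j = if j ≤ Multiset.card (B.filter (fun x => staircaseF k M ε j ≤ x)) then j else 0 :=
        (if_pos hcnt).symm
    _ ≤ staircaseThresh k M ε B := Finset.le_sup (f := fun i =>
        if i ≤ Multiset.card (B.filter (fun x => staircaseF k M ε i ≤ x)) then i else 0) hmem

/-- Either every element of the top part `A` clears `a`, or no element of `B - A` does. -/
lemma Multiset.le_card_filter_of_top {α : Type*} [LinearOrder α] {A B : Multiset α} {a : α}
    {n : ℕ} (hAB : A ≤ B) (htop : ∀ x ∈ A, ∀ y ∈ B - A, y ≤ x)
    (hA : n ≤ Multiset.card A) (hB : n ≤ Multiset.card (B.filter (a ≤ ·))) :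
    n ≤ Multiset.card (A.filter (a ≤ ·)) := by
  by_cases hall : ∀ x ∈ A, a ≤ x
  · rwa [Multiset.filter_eq_self.mpr hall]
  push Not at hall
  obtain ⟨x, hx, hxa⟩ := hall
  have hrest : (B - A).filter (a ≤ ·) = 0 :=
    Multiset.filter_eq_nil.mpr fun y hy hay => (hxa.trans_le' (hay.trans (htop x hx y hy))).false
  rwa [← add_tsub_cancel_of_le hAB, Multiset.filter_add, hrest, add_zero] at hB

lemma staircase_utility_nonpos_of_one_le (k : ℕ) {M ε : ℝ} (hM : 0 ≤ M) (hε : 0 < ε)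
    {n : ℕ} (hn : 1 ≤ n) (t : ℕ) :
    (t : ℝ) * ε - n * staircaseF k M ε t ≤ 0 := by
  have hF0 := staircaseF_zero_nonneg k hM hε
  have hFt := staircaseF_nonneg k hM hε t
  have hn' : (1 : ℝ) ≤ n := by exact_mod_cast hn
  have := staircaseF_eq_add k M ε t
  nlinarith

theorem staircase_strict_MIC_general
    (k : ℕ) (M ε : ℝ) (hM : 0 < M) (hε : 0 < ε)
    (b : Multiset ℝ)
    (S Fk : Multiset ℝ) (hS : S ≤ b)
    (hsize : Multiset.card S + Multiset.card Fk ≤ k)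
    -- the confirmed bids of the strategic block S + Fk: its t largest bids
    (CS CF : Multiset ℝ) (hCS : CS ≤ S)
    (hCcard : Multiset.card (CS + CF) = staircaseThresh k M ε (S + Fk))
    (hCtop : ∀ x ∈ CS + CF, ∀ y ∈ (S + Fk) - (CS + CF), y ≤ x)
    -- the honest block: top min(k, |b|) bids of b
    (Bstar : Multiset ℝ) (hBstar : Bstar ≤ b)
    (hBcard : Multiset.card Bstar = min k (Multiset.card b))
    (hBtop : ∀ x ∈ Bstar, ∀ y ∈ b - Bstar, y ≤ x) :
    (staircaseThresh k M ε (S + Fk) : ℝ) * ε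
      - (Multiset.card CF : ℝ) * staircaseF k M ε (staircaseThresh k M ε (S + Fk))
    ≤ (staircaseThresh k M ε Bstar : ℝ) * ε := by
  set t := staircaseThresh k M ε (S + Fk)
  have hhonest : (0 : ℝ) ≤ staircaseThresh k M ε Bstar * ε := by positivity
  obtain hCF | hCF := Nat.eq_zero_or_pos (Multiset.card CF)
  · rw [Multiset.card_eq_zero.mp hCF, add_zero] at hCcard hCtop
    have hCSb : CS ≤ b := hCS.trans hS
    have hCS_clear : t ≤ Multiset.card (CS.filter (staircaseF k M ε t ≤ ·)) :=
      Multiset.le_card_filter_of_top (hCS.trans (Multiset.le_add_right _ _)) hCtop hCcard.ge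
        (staircaseThresh_le_card_filter k M ε (S + Fk))
    have hb_clear : t ≤ Multiset.card (b.filter (staircaseF k M ε t ≤ ·)) :=
      hCS_clear.trans (Multiset.card_le_card (Multiset.filter_le_filter _ hCSb))
    have htBstar : t ≤ Multiset.card Bstar := by
      have := Multiset.card_le_card hCS
      have := Multiset.card_le_card hCSb
      omega
    have hle : t ≤ staircaseThresh k M ε Bstar := le_staircaseThresh k M ε htBstar
      (Multiset.le_card_filter_of_top hBstar hBtop htBstar hb_clear)
    rw [hCF, Nat.cast_zero, zero_mul, sub_zero]
    gcongr
  · linarith [staircase_utility_nonpos_of_one_le k hM.le hε hCF t]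

/-- Strict MIC of the staircase mechanism (for an arbitrary tie-breaking rule,
modelled by quantifying over every admissible choice of confirmed
sub-multiset): for every multiset b of bids, every sub-multiset S of b, and
every multiset Fk of fake bids injected by the miner with |S| + |Fk| ≤ k, the
miner's strategic utility t(S + Fk)·ε − (#confirmed fake bids)·F_{t(S+Fk)} is
at most the honest revenue t(B*)·ε, where B* is the block formed by the top
min(k, |b|) bids of b. -/
theorem staircase_strict_MIC
    (k : ℕ) (hk : 1 ≤ k) (M ε : ℝ) (hM : 0 < M) (hε : 0 < ε)
    (b : Multiset ℝ) (hb : ∀ x ∈ b, (0:ℝ) ≤ x)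
    (S Fk : Multiset ℝ) (hS : S ≤ b) (hFk0 : ∀ x ∈ Fk, (0:ℝ) ≤ x)
    (hsize : Multiset.card S + Multiset.card Fk ≤ k)
    -- the confirmed bids of the strategic block S + Fk: its t largest bids
    (CS CF : Multiset ℝ) (hCS : CS ≤ S) (hCF : CF ≤ Fk)
    (hCcard : Multiset.card (CS + CF) = staircaseThresh k M ε (S + Fk))
    (hCtop : ∀ x ∈ CS + CF, ∀ y ∈ (S + Fk) - (CS + CF), y ≤ x)
    -- the honest block: top min(k, |b|) bids of b
    (Bstar : Multiset ℝ) (hBstar : Bstar ≤ b)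
    (hBcard : Multiset.card Bstar = min k (Multiset.card b))
    (hBtop : ∀ x ∈ Bstar, ∀ y ∈ b - Bstar, y ≤ x) :
    (staircaseThresh k M ε (S + Fk) : ℝ) * ε
      - (Multiset.card CF : ℝ) * staircaseF k M ε (staircaseThresh k M ε (S + Fk))
    ≤ (staircaseThresh k M ε Bstar : ℝ) * ε :=
  staircase_strict_MIC_general k M ε hM hε b S Fk hS hsize CS CF hCS hCcard hCtop Bstar hBstar
    hBcard hBtop
end
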